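/- Let A be a finite-dimensional algebra over a finite field k with q elements, and let M, N, L be finite-dimensional A-modules. If Ext^1_A(N, L) is at most 1-dimensional over k and Hom_A(N, L) has dimension h, then G^M_{NL} ∈ {0, |Aut_A(N⊕L)|/(|Aut_A(N)|·|Aut_A(L)|·q^h), (q-1)·|Aut_A(M)|/(|Aut_A(N)|·|Aut_A(L)|·q^h) · (|Ext^1_A(N,L)_M|/(q-1))} where the last case requires M ≇ N ⊕ L; in particular each nonzero Ext class with middle term M contributes equally. -/

import Mathlib

/-!
An extension `0 → L → M → N → 0` is the same as a submodule `U ≤ M` counted by `G^M_{NL}`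
together with identifications `L ≅ U` and `M/U ≅ N`, so there are
`G^M_{NL} · |Aut L| · |Aut N|` of them. The group `Aut M` acts on them, its orbits are the
classes in `Ext¹(N, L)_M`, and the stabiliser of `(ι, π)` is `{1 + ι s π | s : N → L}`, of order
`q^h`: this is Riedtmann's formula. If `M ≅ N ⊕ L`, every extension with middle term `M` splits,
so there is a single class. Otherwise `kˣ` acts freely on the classes by rescaling `π`, because a
class fixed by `c ≠ 1` splits; hence `q - 1` divides their number.
-/

open CategoryTheory

/-- The Hall number `G^M_{N L}`: the number of submodules `U ⊆ M` with
`U ≅ L` and `M/U ≅ N`. -/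
noncomputable def hallNum (A : Type*) [Ring A] (M N L : Type*)
    [AddCommGroup M] [Module A M] [AddCommGroup N] [Module A N]
    [AddCommGroup L] [Module A L] : ℕ :=
  Nat.card {U : Submodule A M // Nonempty (U ≃ₗ[A] L) ∧ Nonempty ((M ⧸ U) ≃ₗ[A] N)}

/-- Short exact sequences `0 → L → M → N → 0` with middle term `M`. -/
def ExtPairs (A : Type*) [Ring A] (M N L : Type*)
    [AddCommGroup M] [Module A M] [AddCommGroup N] [Module A N]
    [AddCommGroup L] [Module A L] : Type _ :=
  {p : (L →ₗ[A] M) × (M →ₗ[A] N) //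
    Function.Injective p.1 ∧ Function.Surjective p.2 ∧
      LinearMap.range p.1 = LinearMap.ker p.2}

/-- Equivalence of extensions with middle term `M`. -/
def ExtPairs.Equiv (A : Type*) [Ring A] (M N L : Type*)
    [AddCommGroup M] [Module A M] [AddCommGroup N] [Module A N]
    [AddCommGroup L] [Module A L]
    (p q : ExtPairs A M N L) : Prop :=
  ∃ φ : M ≃ₗ[A] M, (φ : M →ₗ[A] M) ∘ₗ p.1.1 = q.1.1 ∧
    q.1.2 ∘ₗ (φ : M →ₗ[A] M) = p.1.2

/-- `Ext¹_A(N, L)_M`: classes of extensions of `N` by `L` with middle term `M`. -/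
def ExtClasses (A : Type*) [Ring A] (M N L : Type*)
    [AddCommGroup M] [Module A M] [AddCommGroup N] [Module A N]
    [AddCommGroup L] [Module A L] : Type _ :=
  Quot (ExtPairs.Equiv A M N L)

instance {A M N : Type*} [Ring A] [AddCommGroup M] [Module A M] [AddCommGroup N] [Module A N]
    [Finite M] [Finite N] : Finite (M →ₗ[A] N) :=
  Finite.of_injective _ DFunLike.coe_injective

theorem AddMonoidHom.surjective_of_exact_of_card_eq {G₁ G₂ G₃ : Type*} [AddGroup G₁]
    [AddGroup G₂] [AddGroup G₃] [Finite G₂] [Finite G₃] {u : G₁ →+ G₂} {v : G₂ →+ G₃}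
    (huv : Function.Exact u v) (hu : Function.Injective u)
    (hcard : Nat.card G₂ = Nat.card G₁ * Nat.card G₃) :
    Function.Surjective v := by
  have : Finite G₁ := Finite.of_injective u hu
  have hker : Nat.card v.ker = Nat.card G₁ := by
    rw [show v.ker = u.range from AddSubgroup.ext huv]
    exact (Nat.card_congr (Equiv.ofInjective u hu)).symm
  have hrange : Nat.card v.range = Nat.card G₃ := by
    have := v.ker.card_mul_index
    rw [AddSubgroup.index_ker, hker, hcard] at this
    exact Nat.eq_of_mul_eq_mul_left Nat.card_pos this
  exact AddMonoidHom.range_eq_top.1 (AddSubgroup.eq_top_of_card_eq _ hrange)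

namespace Function.Exact

variable {R M N P Q : Type*} [Ring R] [AddCommGroup M] [AddCommGroup N] [AddCommGroup P]
  [AddCommGroup Q] [Module R M] [Module R N] [Module R P] [Module R Q]
  {f : M →ₗ[R] N} {g : N →ₗ[R] P}

theorem exists_lift_of_comp_eq_zero (hfg : Exact f g) (hf : Injective f) {h : Q →ₗ[R] N}
    (hh : g ∘ₗ h = 0) : ∃ s : Q →ₗ[R] M, f ∘ₗ s = h := by
  have hmem (x : Q) : h x ∈ LinearMap.range f := (hfg (h x)).1 (LinearMap.congr_fun hh x)
  refine ⟨(LinearEquiv.ofInjective f hf).symm.toLinearMap ∘ₗ h.codRestrict _ hmem, ?_⟩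
  ext x
  simp [← LinearEquiv.ofInjective_apply f (h := hf)]

theorem exists_desc_of_comp_eq_zero (hfg : Exact f g) (hg : Surjective g) {h : N →ₗ[R] Q}
    (hh : h ∘ₗ f = 0) : ∃ d : P →ₗ[R] Q, d ∘ₗ g = h :=
  ⟨(LinearMap.range f).liftQ h (LinearMap.range_le_ker_iff.mpr hh) ∘ₗ
    (hfg.linearEquivOfSurjective hg).symm.toLinearMap, by ext x; simp⟩

/-- `Hom(P, -)` is left exact, and `|Hom(P, N)| = |Hom(P, P)| · |Hom(P, M)|` then forces
`g ∘ - : Hom(P, N) → Hom(P, P)` to be onto. -/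
theorem exists_section_of_linearEquiv_prod [Finite N] (hfg : Exact f g) (hf : Injective f)
    (e : N ≃ₗ[R] P × M) : ∃ s : P →ₗ[R] N, g ∘ₗ s = LinearMap.id := by
  have : Finite P := Finite.of_surjective _ (Prod.fst_surjective.comp e.surjective)
  let F := (LinearMap.compRight ℕ f : (P →ₗ[R] M) →ₗ[ℕ] P →ₗ[R] N).toAddMonoidHom
  let G := (LinearMap.compRight ℕ g : (P →ₗ[R] N) →ₗ[ℕ] P →ₗ[R] P).toAddMonoidHom
  have hFG : Exact F G := fun h => by
    refine ⟨fun hh => hfg.exists_lift_of_comp_eq_zero hf hh, ?_⟩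
    rintro ⟨s, rfl⟩
    exact congrArg (· ∘ₗ s) hfg.linearMap_comp_eq_zero
  have hF : Injective F := fun s t hst => by
    ext x; exact hf (LinearMap.congr_fun hst x)
  have hcard : Nat.card (P →ₗ[R] N) = Nat.card (P →ₗ[R] M) * Nat.card (P →ₗ[R] P) := by
    let post : (P →ₗ[R] N) ≃ (P →ₗ[R] P × M) :=
      ⟨(e.toLinearMap ∘ₗ ·), (e.symm.toLinearMap ∘ₗ ·), fun h => by ext; simp,
        fun h => by ext <;> simp⟩
    rw [Nat.card_congr (post.trans (LinearMap.prodEquiv ℕ).symm.toEquiv), Nat.card_prod, mul_comm]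
  exact AddMonoidHom.surjective_of_exact_of_card_eq hFG hF hcard LinearMap.id

end Function.Exact

theorem MulAction.card_mul_card_eq_card_orbitRel_quotient_mul_card {G X H : Type*} [Group G]
    [MulAction G X] (e : ∀ x : X, H ≃ stabilizer G x) :
    Nat.card X * Nat.card H = Nat.card (orbitRel.Quotient G X) * Nat.card G := by
  have : X × H ≃ orbitRel.Quotient G X × G :=
    calc X × H ≃ (Σ ω : orbitRel.Quotient G X, orbit G ω.out) × H :=
          (selfEquivSigmaOrbits G X).prodCongr (Equiv.refl H)
      _ ≃ Σ ω : orbitRel.Quotient G X, orbit G ω.out × H := Equiv.sigmaProdDistrib _ H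
      _ ≃ Σ _ : orbitRel.Quotient G X, G := Equiv.sigmaCongrRight fun ω =>
          ((orbitEquivQuotientStabilizer G ω.out).prodCongr (e ω.out)).trans
            Subgroup.groupEquivQuotientProdSubgroup.symm
      _ ≃ orbitRel.Quotient G X × G := Equiv.sigmaEquivProd _ G
  simpa only [Nat.card_prod] using Nat.card_congr this

section LinearEquivCongr

variable {A : Type*} [Ring A] {M₁ M₂ N₁ N₂ : Type*} [AddCommGroup M₁] [Module A M₁]
  [AddCommGroup M₂] [Module A M₂] [AddCommGroup N₁] [Module A N₁] [AddCommGroup N₂] [Module A N₂]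

def LinearEquiv.equivCongr (e : M₁ ≃ₗ[A] M₂) (e' : N₁ ≃ₗ[A] N₂) :
    (M₁ ≃ₗ[A] N₁) ≃ (M₂ ≃ₗ[A] N₂) where
  toFun f := (e.symm.trans f).trans e'
  invFun f := (e.trans f).trans e'.symm
  left_inv f := by ext; simp
  right_inv f := by ext; simp

end LinearEquivCongr

namespace Submodule

variable {A : Type*} [Ring A] {M N L : Type*} [AddCommGroup M] [Module A M] [AddCommGroup N]
  [Module A N] [AddCommGroup L] [Module A L]

noncomputable def linearEquivEquivInjective (U : Submodule A M) :
    (L ≃ₗ[A] U) ≃ {f : L →ₗ[A] M // Function.Injective f ∧ LinearMap.range f = U} where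
  toFun e := ⟨U.subtype ∘ₗ e.toLinearMap, U.injective_subtype.comp e.injective, by
    rw [LinearMap.range_comp, LinearEquiv.range, Submodule.map_top, Submodule.range_subtype]⟩
  invFun f := (LinearEquiv.ofInjective f.1 f.2.1).trans (LinearEquiv.ofEq _ _ f.2.2)
  left_inv e := by ext; simp
  right_inv f := by ext; simp

noncomputable def quotientLinearEquivEquivSurjective (U : Submodule A M) :
    ((M ⧸ U) ≃ₗ[A] N) ≃ {g : M →ₗ[A] N // Function.Surjective g ∧ LinearMap.ker g = U} where
  toFun e := ⟨e.toLinearMap ∘ₗ U.mkQ, e.surjective.comp U.mkQ_surjective, by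
    rw [LinearMap.ker_comp, LinearEquiv.ker, Submodule.comap_bot, Submodule.ker_mkQ]⟩
  invFun g := (U.quotEquivOfEq _ g.2.2.symm).trans (g.1.quotKerEquivOfSurjective g.2.1)
  left_inv e := by ext x; induction x using Submodule.Quotient.induction_on; simp
  right_inv g := by ext; simp

end Submodule

theorem DistribMulAction.isUnit_toModuleAut_sub_id {A N k : Type*} [Ring A] [AddCommGroup N]
    [Module A N] [DivisionRing k] [Module k N] [SMulCommClass k A N]
    {c : kˣ} (hc : c ≠ 1) :
    IsUnit ((DistribMulAction.toModuleAut A N c).toLinearMap - LinearMap.id : Module.End A N) := by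
  have hc' : (c : k) - 1 ≠ 0 := sub_ne_zero.2 (Units.val_eq_one.not.2 hc)
  have h : ⇑((DistribMulAction.toModuleAut A N c).toLinearMap - LinearMap.id : N →ₗ[A] N) =
      (Units.mk0 _ hc' • · : N → N) := by
    ext x
    simp [Units.smul_def, sub_smul]
  rw [Module.End.isUnit_iff, h]
  exact MulAction.bijective _

abbrev HallSubmodule (A M N L : Type*) [Ring A] [AddCommGroup M] [Module A M] [AddCommGroup N]
    [Module A N] [AddCommGroup L] [Module A L] : Type _ :=
  {U : Submodule A M // Nonempty (U ≃ₗ[A] L) ∧ Nonempty ((M ⧸ U) ≃ₗ[A] N)}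

namespace ExtPairs

variable {A : Type*} [Ring A] {M N L : Type*} [AddCommGroup M] [Module A M] [AddCommGroup N]
  [Module A N] [AddCommGroup L] [Module A L]

def ofExact (f : L →ₗ[A] M) (g : M →ₗ[A] N) (hf : Function.Injective f)
    (hg : Function.Surjective g) (hfg : Function.Exact f g) : ExtPairs A M N L :=
  ⟨(f, g), hf, hg, (LinearMap.exact_iff.1 hfg).symm⟩

theorem exact (p : ExtPairs A M N L) : Function.Exact p.1.1 p.1.2 :=
  LinearMap.exact_iff.2 p.2.2.2.symm

instance : MulAction (M ≃ₗ[A] M) (ExtPairs A M N L) where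
  smul φ p := ofExact (φ.toLinearMap ∘ₗ p.1.1) (p.1.2 ∘ₗ φ.symm.toLinearMap)
    (φ.injective.comp p.2.1) (p.2.2.1.comp φ.symm.surjective)
    ((LinearEquiv.conj_exact_iff_exact _ _ φ).2 p.exact)
  one_smul _ := rfl
  mul_smul _ _ _ := rfl

theorem smul_fst (φ : M ≃ₗ[A] M) (p : ExtPairs A M N L) :
    (φ • p).1.1 = φ.toLinearMap ∘ₗ p.1.1 := rfl

theorem smul_snd (φ : M ≃ₗ[A] M) (p : ExtPairs A M N L) :
    (φ • p).1.2 = p.1.2 ∘ₗ φ.symm.toLinearMap := rfl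

theorem ext_iff {p q : ExtPairs A M N L} : p = q ↔ p.1.1 = q.1.1 ∧ p.1.2 = q.1.2 :=
  ⟨fun h => h ▸ ⟨rfl, rfl⟩, fun h => Subtype.ext (Prod.ext h.1 h.2)⟩

theorem equiv_iff (p q : ExtPairs A M N L) :
    ExtPairs.Equiv A M N L p q ↔ ∃ φ : M ≃ₗ[A] M, φ • p = q := by
  refine exists_congr fun φ => ?_
  rw [ext_iff, smul_fst, smul_snd, eq_comm (b := q.1.2),
    LinearEquiv.eq_comp_toLinearMap_symm]

theorem equiv_iff_orbitRel (p q : ExtPairs A M N L) :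
    ExtPairs.Equiv A M N L p q ↔ MulAction.orbitRel (M ≃ₗ[A] M) _ p q := by
  rw [equiv_iff, Setoid.comm', MulAction.orbitRel_apply, MulAction.mem_orbit_iff]

def equivOrbitRelQuotient :
    ExtClasses A M N L ≃ MulAction.orbitRel.Quotient (M ≃ₗ[A] M) (ExtPairs A M N L) :=
  Quot.congrRight equiv_iff_orbitRel

def extClass (p : ExtPairs A M N L) : ExtClasses A M N L :=
  Quot.mk _ p

theorem extClass_eq_extClass_iff {p q : ExtPairs A M N L} :
    p.extClass = q.extClass ↔ ExtPairs.Equiv A M N L p q :=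
  equivOrbitRelQuotient.injective.eq_iff.symm.trans
    (Quotient.eq.trans (equiv_iff_orbitRel p q).symm)

def unipotent (p : ExtPairs A M N L) (s : N →ₗ[A] L) : M ≃ₗ[A] M :=
  LinearEquiv.ofLinearMap (LinearMap.id + p.1.1 ∘ₗ s ∘ₗ p.1.2)
    (LinearMap.id - p.1.1 ∘ₗ s ∘ₗ p.1.2) (by ext; simp [p.exact.apply_apply_eq_zero])
    (by ext; simp [p.exact.apply_apply_eq_zero])

theorem unipotent_toLinearMap (p : ExtPairs A M N L) (s : N →ₗ[A] L) :
    (p.unipotent s).toLinearMap = LinearMap.id + p.1.1 ∘ₗ s ∘ₗ p.1.2 := rfl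

theorem mem_stabilizer_iff {p : ExtPairs A M N L} {φ : M ≃ₗ[A] M} :
    φ ∈ MulAction.stabilizer (M ≃ₗ[A] M) p ↔
      φ.toLinearMap ∘ₗ p.1.1 = p.1.1 ∧ p.1.2 ∘ₗ φ.toLinearMap = p.1.2 := by
  rw [MulAction.mem_stabilizer_iff, ext_iff, smul_fst, smul_snd, eq_comm (b := p.1.2),
    LinearEquiv.eq_comp_toLinearMap_symm]

noncomputable def homEquivStabilizer (p : ExtPairs A M N L) :
    (N →ₗ[A] L) ≃ MulAction.stabilizer (M ≃ₗ[A] M) p := by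
  refine Equiv.ofBijective (fun s => ⟨p.unipotent s, mem_stabilizer_iff.2 ⟨?_, ?_⟩⟩) ⟨?_, ?_⟩
  · ext; simp [unipotent_toLinearMap, p.exact.apply_apply_eq_zero]
  · ext; simp [unipotent_toLinearMap, p.exact.apply_apply_eq_zero]
  · intro s t hst
    have h := congrArg (fun φ : MulAction.stabilizer _ p => φ.1.toLinearMap) hst
    simp only [unipotent_toLinearMap, add_right_inj, LinearMap.cancel_left p.2.1] at h
    exact (LinearMap.cancel_right p.2.2.1).1 h
  · rintro ⟨φ, hφ⟩
    obtain ⟨hφι, hπφ⟩ := mem_stabilizer_iff.1 hφ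
    obtain ⟨d, hd⟩ := p.exact.exists_desc_of_comp_eq_zero p.2.2.1
      (h := φ.toLinearMap - LinearMap.id)
      (by rw [LinearMap.sub_comp, hφι, LinearMap.id_comp, sub_self])
    have hπd : p.1.2 ∘ₗ d = 0 := by
      rw [← LinearMap.cancel_right p.2.2.1, LinearMap.comp_assoc, hd, LinearMap.comp_sub, hπφ,
        LinearMap.comp_id, sub_self, LinearMap.zero_comp]
    obtain ⟨s, hs⟩ := p.exact.exists_lift_of_comp_eq_zero p.2.1 hπd
    refine ⟨s, Subtype.ext (LinearEquiv.toLinearMap_injective ?_)⟩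
    rw [unipotent_toLinearMap, ← LinearMap.comp_assoc, hs, hd, add_sub_cancel]

theorem card_mul_card_hom :
    Nat.card (ExtPairs A M N L) * Nat.card (N →ₗ[A] L) =
      Nat.card (ExtClasses A M N L) * Nat.card (M ≃ₗ[A] M) := by
  rw [Nat.card_congr equivOrbitRelQuotient]
  exact MulAction.card_mul_card_eq_card_orbitRel_quotient_mul_card homEquivStabilizer

noncomputable def hallSubmodule (p : ExtPairs A M N L) : HallSubmodule A M N L :=
  ⟨LinearMap.range p.1.1, ⟨(LinearEquiv.ofInjective _ p.2.1).symm⟩,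
    ⟨(Submodule.quotEquivOfEq _ _ p.2.2.2).trans (p.1.2.quotKerEquivOfSurjective p.2.2.1)⟩⟩

def fiberHallSubmoduleEquiv (U : HallSubmodule A M N L) :
    {p : ExtPairs A M N L // p.hallSubmodule = U} ≃
      {f : L →ₗ[A] M // Function.Injective f ∧ LinearMap.range f = U.1} ×
        {g : M →ₗ[A] N // Function.Surjective g ∧ LinearMap.ker g = U.1} where
  toFun p := (⟨p.1.1.1, p.1.2.1, congrArg Subtype.val p.2⟩,
    ⟨p.1.1.2, p.1.2.2.1, p.1.2.2.2 ▸ congrArg Subtype.val p.2⟩)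
  invFun fg := ⟨⟨(fg.1.1, fg.2.1), fg.1.2.1, fg.2.2.1, fg.1.2.2.trans fg.2.2.2.symm⟩,
    Subtype.ext fg.1.2.2⟩
  left_inv _ := rfl
  right_inv _ := rfl

theorem card_eq_hallNum_mul :
    Nat.card (ExtPairs A M N L) =
      hallNum A M N L * (Nat.card (L ≃ₗ[A] L) * Nat.card (N ≃ₗ[A] N)) := by
  have (U : HallSubmodule A M N L) :
      {p : ExtPairs A M N L // p.hallSubmodule = U} ≃ (L ≃ₗ[A] L) × (N ≃ₗ[A] N) :=
    (fiberHallSubmoduleEquiv U).trans <| Equiv.prodCongr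
      (U.1.linearEquivEquivInjective.symm.trans ((LinearEquiv.refl A L).equivCongr U.2.1.some))
      (U.1.quotientLinearEquivEquivSurjective.symm.trans
        (U.2.2.some.equivCongr (LinearEquiv.refl A N)))
  rw [← Nat.card_congr (Equiv.sigmaFiberEquiv hallSubmodule),
    Nat.card_congr ((Equiv.sigmaCongrRight this).trans (Equiv.sigmaEquivProd _ _)),
    Nat.card_prod, Nat.card_prod, hallNum]

def Splits (p : ExtPairs A M N L) : Prop :=
  ∃ s : N →ₗ[A] M, p.1.2 ∘ₗ s = LinearMap.id

theorem Splits.exists_linearEquiv_prod {p : ExtPairs A M N L} (hp : p.Splits) :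
    ∃ e : M ≃ₗ[A] L × N, p.1.1 = e.symm.toLinearMap ∘ₗ LinearMap.inl A L N ∧
      p.1.2 = LinearMap.snd A L N ∘ₗ e.toLinearMap :=
  ⟨_, (p.exact.splitSurjectiveEquiv p.2.1 ⟨hp.choose, hp.choose_spec⟩).2⟩

theorem Splits.equiv {p q : ExtPairs A M N L} (hp : p.Splits) (hq : q.Splits) :
    ExtPairs.Equiv A M N L p q := by
  obtain ⟨e, hιp, hπp⟩ := hp.exists_linearEquiv_prod
  obtain ⟨e', hιq, hπq⟩ := hq.exists_linearEquiv_prod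
  refine ⟨e.trans e'.symm, ?_, ?_⟩
  · rw [hιp, hιq]; ext; simp
  · rw [hπp, hπq]; ext; simp

theorem Splits.nonempty_linearEquiv_prod {p : ExtPairs A M N L} (hp : p.Splits) :
    Nonempty (M ≃ₗ[A] N × L) :=
  let ⟨e, _⟩ := hp.exists_linearEquiv_prod
  ⟨e.trans (LinearEquiv.prodComm A L N)⟩

theorem splits_of_linearEquiv_prod [Finite M] (p : ExtPairs A M N L) (e : M ≃ₗ[A] N × L) :
    p.Splits :=
  p.exact.exists_section_of_linearEquiv_prod p.2.1 e

def ofLinearEquivProd (e : M ≃ₗ[A] N × L) : ExtPairs A M N L :=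
  ofExact (e.symm.toLinearMap ∘ₗ LinearMap.inr A N L) (LinearMap.fst A N L ∘ₗ e.toLinearMap)
    (e.symm.injective.comp LinearMap.inr_injective) (Prod.fst_surjective.comp e.surjective)
    ((LinearEquiv.conj_symm_exact_iff_exact _ _ e).2 Function.Exact.inr_fst)

theorem card_extClasses_eq_one [Finite M] (e : M ≃ₗ[A] N × L) :
    Nat.card (ExtClasses A M N L) = 1 := by
  refine Nat.card_eq_one_iff_exists.2 ⟨(ofLinearEquivProd e).extClass, Quot.ind fun p => ?_⟩
  exact extClass_eq_extClass_iff.2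
    ((p.splits_of_linearEquiv_prod e).equiv ((ofLinearEquivProd e).splits_of_linearEquiv_prod e))

def postcomp (α : N ≃ₗ[A] N) (p : ExtPairs A M N L) : ExtPairs A M N L :=
  ofExact p.1.1 (α.toLinearMap ∘ₗ p.1.2) p.2.1 (α.surjective.comp p.2.2.1)
    (LinearEquiv.postcomp_exact_iff_exact.2 p.exact)

instance : MulAction (N ≃ₗ[A] N) (ExtClasses A M N L) where
  smul α := Quot.map (postcomp α) fun _ _ ⟨φ, hι, hπ⟩ =>
    ⟨φ, hι, by rw [postcomp, ofExact, LinearMap.comp_assoc, hπ]; rfl⟩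
  one_smul := Quot.ind fun _ => rfl
  mul_smul _ _ := Quot.ind fun _ => rfl

theorem splits_of_smul_extClass_eq {α : N ≃ₗ[A] N}
    (hα : IsUnit (α.toLinearMap - LinearMap.id : Module.End A N)) {p : ExtPairs A M N L}
    (h : α • p.extClass = p.extClass) : p.Splits := by
  obtain ⟨φ, hφι, hπφ⟩ := extClass_eq_extClass_iff.1 h
  change φ.toLinearMap ∘ₗ p.1.1 = p.1.1 at hφι
  change p.1.2 ∘ₗ φ.toLinearMap = α.toLinearMap ∘ₗ p.1.2 at hπφ
  obtain ⟨d, hd⟩ := p.exact.exists_desc_of_comp_eq_zero p.2.2.1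
    (h := φ.toLinearMap - LinearMap.id)
    (by rw [LinearMap.sub_comp, hφι, LinearMap.id_comp, sub_self])
  have hπd : p.1.2 ∘ₗ d = α.toLinearMap - LinearMap.id := by
    rw [← LinearMap.cancel_right p.2.2.1, LinearMap.comp_assoc, hd, LinearMap.comp_sub, hπφ,
      LinearMap.comp_id, LinearMap.sub_comp, LinearMap.id_comp]
  -- `φ - 1 = d ∘ π` with `π ∘ d = α - 1`, so `d ∘ (α - 1)⁻¹` is a section of `π`.
  refine ⟨d ∘ₗ (hα.unit⁻¹ : (Module.End A N)ˣ), ?_⟩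
  rw [← LinearMap.comp_assoc, hπd, ← Module.End.mul_eq_comp, hα.mul_val_inv]
  rfl

theorem card_units_dvd_card_extClasses (k : Type*) [DivisionRing k] [Module k N]
    [SMulCommClass k A N]
    (hM : ¬ Nonempty (M ≃ₗ[A] N × L)) : Nat.card kˣ ∣ Nat.card (ExtClasses A M N L) := by
  let : MulAction kˣ (ExtClasses A M N L) :=
    MulAction.compHom _ (DistribMulAction.toModuleAut A N)
  have hfree (x : ExtClasses A M N L) : MulAction.stabilizer kˣ x = ⊥ := by
    refine (Subgroup.eq_bot_iff_forall _).2 fun c hc => ?_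
    by_contra hc1
    induction x using Quot.ind with
    | _ p =>
      exact hM (splits_of_smul_extClass_eq
        (DistribMulAction.isUnit_toModuleAut_sub_id hc1) hc).nonempty_linearEquiv_prod
  rw [Nat.card_congr (MulAction.selfEquivOrbitsQuotientProd hfree), Nat.card_prod]
  exact dvd_mul_left _ _

end ExtPairs

theorem hallNum_mem_of_ext_dim_le_one_general
    (q : ℕ) (k : Type) [Field k] [Finite k] (hq : Nat.card k = q)
    (A : Type) [Ring A] [Algebra k A]
    (M N L : Type)
    [AddCommGroup M] [Module A M] [Finite M]
    [AddCommGroup N] [Module k N] [Module A N] [IsScalarTower k A N] [Finite N]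
    [AddCommGroup L] [Module k L] [Module A L] [Finite L]
    [SMulCommClass A k L]
    (h : ℕ) (hh : Module.finrank k (N →ₗ[A] L) = h) :
    hallNum A M N L * (Nat.card (N ≃ₗ[A] N) * Nat.card (L ≃ₗ[A] L) * q ^ h) = 0 ∨
    hallNum A M N L * (Nat.card (N ≃ₗ[A] N) * Nat.card (L ≃ₗ[A] L) * q ^ h) =
      Nat.card ((N × L) ≃ₗ[A] N × L) ∨
    (¬ Nonempty (M ≃ₗ[A] N × L) ∧ (q - 1) ∣ Nat.card (ExtClasses A M N L) ∧
      hallNum A M N L * (Nat.card (N ≃ₗ[A] N) * Nat.card (L ≃ₗ[A] L) * q ^ h) =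
        Nat.card (M ≃ₗ[A] M) * Nat.card (ExtClasses A M N L)) := by
  have card_hom : Nat.card (N →ₗ[A] L) = q ^ h := by
    rw [Module.natCard_eq_pow_finrank (K := k), hq, hh]
  have riedtmann : hallNum A M N L * (Nat.card (N ≃ₗ[A] N) * Nat.card (L ≃ₗ[A] L) * q ^ h) =
      Nat.card (M ≃ₗ[A] M) * Nat.card (ExtClasses A M N L) := by
    rw [← card_hom, mul_comm (Nat.card (N ≃ₗ[A] N)), ← mul_assoc,
      ← ExtPairs.card_eq_hallNum_mul, ExtPairs.card_mul_card_hom, mul_comm]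
  by_cases hsplit : Nonempty (M ≃ₗ[A] N × L)
  · obtain ⟨e⟩ := hsplit
    refine Or.inr (Or.inl ?_)
    rw [riedtmann, ExtPairs.card_extClasses_eq_one e, mul_one]
    exact Nat.card_congr (LinearEquiv.equivCongr e e)
  · refine Or.inr (Or.inr ⟨hsplit, ?_, riedtmann⟩)
    rw [← hq, ← Nat.card_units]
    exact ExtPairs.card_units_dvd_card_extClasses k hsplit

theorem hallNum_mem_of_ext_dim_le_one
    (q : ℕ) (k : Type) [Field k] [Finite k] (hq : Nat.card k = q)
    (A : Type) [Ring A] [Algebra k A] [Module.Finite k A]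
    (M N L : Type)
    [AddCommGroup M] [Module k M] [Module A M] [IsScalarTower k A M] [Module.Finite k M] [Finite M]
    [AddCommGroup N] [Module k N] [Module A N] [IsScalarTower k A N] [Module.Finite k N] [Finite N]
    [AddCommGroup L] [Module k L] [Module A L] [IsScalarTower k A L] [Module.Finite k L] [Finite L]
    [SMulCommClass A k L]
    (h : ℕ) (hh : Module.finrank k (N →ₗ[A] L) = h)
    -- `dim_k Ext¹_A(N, L) ≤ 1`
    (hext : Module.finrank k
      (((Ext k (ModuleCat A) 1).obj (Opposite.op (ModuleCat.of A N))).obj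
        (ModuleCat.of A L)) ≤ 1) :
    hallNum A M N L * (Nat.card (N ≃ₗ[A] N) * Nat.card (L ≃ₗ[A] L) * q ^ h) = 0 ∨
    hallNum A M N L * (Nat.card (N ≃ₗ[A] N) * Nat.card (L ≃ₗ[A] L) * q ^ h) =
      Nat.card ((N × L) ≃ₗ[A] N × L) ∨
    (¬ Nonempty (M ≃ₗ[A] N × L) ∧ (q - 1) ∣ Nat.card (ExtClasses A M N L) ∧
      hallNum A M N L * (Nat.card (N ≃ₗ[A] N) * Nat.card (L ≃ₗ[A] L) * q ^ h) =
        Nat.card (M ≃ₗ[A] M) * Nat.card (ExtClasses A M N L)) :=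
  hallNum_mem_of_ext_dim_le_one_general q k hq A M N L h hh
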